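/- Column-shift identity for the Y-program value: Let f(Y) be the optimal value of the Y-program. For each i = 1,…,L−1, let P_i ∈ ℝ^{2L} be the vector whose i-th 2-block is 1₂, whose (i+1)-st 2-block is −1₂, and whose other blocks are zero. Then for every Y ∈ ℝ^{2L×2L} and every v ∈ ℝ^{2L} with 2-blocks v_q ∈ ℝ², one has f(Y + v P_iᵀ) = f(Y) + v_i·μ_i^(1) + v_{i+1}·μ_{i+1}^(1). -/

import Mathlib

open Matrix BigOperators

noncomputable section

abbrev Idx (L : ℕ) := Fin L × Fin 2

/-- The fixed 1-marginal `μ_p^(1) = (1 - ρ_p, ρ_p)ᵀ`. -/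
def mu1 {L : ℕ} (ρ : Fin L → ℝ) (p : Fin L) (t : Fin 2) : ℝ :=
  if t = 0 then 1 - ρ p else ρ p

/-- The dual objective `F(Y, {φ_pq, ψ_pq})`. -/
def dualObj {L : ℕ} (ρ : Fin L → ℝ) (Y : Matrix (Idx L) (Idx L) ℝ)
    (φ ψ : Fin L → Fin L → Fin 2 → ℝ) : ℝ :=
  2 * ∑ p : Fin L, ∑ q : Fin L,
      (if p < q then
        (∑ t : Fin 2, φ p q t * mu1 ρ p t) + (∑ u : Fin 2, ψ p q u * mu1 ρ q u)
       else 0)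
    - ∑ p : Fin L, ∑ t : Fin 2, Y (p, t) (p, t) * mu1 ρ p t

/-- Set of objective values of the `Y`-program. -/
def Yvalues {L : ℕ} (ρ : Fin L → ℝ) (C Y : Matrix (Idx L) (Idx L) ℝ) : Set ℝ :=
  {x | ∃ φ ψ : Fin L → Fin L → Fin 2 → ℝ,
    (∀ p q : Fin L, p < q → ∀ t u : Fin 2,
        φ p q t + ψ p q u ≤ C (p, t) (q, u) - Y (p, t) (q, u)) ∧
    x = dualObj ρ Y φ ψ}

/-- The optimal value `f(Y)` of the `Y`-program. -/
def fval {L : ℕ} (ρ : Fin L → ℝ) (C Y : Matrix (Idx L) (Idx L) ℝ) : ℝ :=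
  sSup (Yvalues ρ C Y)

/-- The vector `P_i` whose `i`-th 2-block is `1₂`, whose `(i+1)`-st 2-block is `-1₂`,
and whose other blocks vanish. -/
def Pvec {L : ℕ} (i : Fin L) (h : (i : ℕ) + 1 < L) : Idx L → ℝ :=
  fun a => if a.1 = i then 1 else if a.1 = ⟨(i : ℕ) + 1, h⟩ then -1 else 0

/-!
The shift only enters the constraint of a pair `p < q` through `v_{(p,t)} P_q`, so
`φ_pq ↦ φ_pq + v_p P_q` is a bijection between the feasible sets of the two programs. It moves the
objective by the constant `colShiftCost`: `2 ∑_{p<q} P_q (v_p·μ_p)` from the `φ`-terms and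
`∑_p P_p (v_p·μ_p)` from the diagonal of `Y`. For `P = P_i` the tail sums `∑_{q>p} P_q` vanish
except at `p = i`, where they equal `-1`, so the constant is `-(v_i·μ_i + v_{i+1}·μ_{i+1})`.
The supremum moves by the same constant because the feasible values are bounded above (by the
value of the product coupling `μ_p ⊗ μ_q`), and `sSup` of an unbounded set of reals would be `0`.
-/

theorem sum_mul_add_sum_mul_le_of_add_le {α β : Type*} [Fintype α] [Fintype β]
    {a : α → ℝ} {b : β → ℝ} (ha : ∀ t, 0 ≤ a t) (hb : ∀ u, 0 ≤ b u)
    (ha1 : ∑ t, a t = 1) (hb1 : ∑ u, b u = 1)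
    {φ : α → ℝ} {ψ : β → ℝ} {c : α → β → ℝ} (hc : ∀ t u, φ t + ψ u ≤ c t u) :
    ∑ t, φ t * a t + ∑ u, ψ u * b u ≤ ∑ t, ∑ u, c t u * (a t * b u) := by
  have hφ : ∑ t, ∑ u, φ t * (a t * b u) = ∑ t, φ t * a t := by
    simp only [← mul_assoc, ← Finset.mul_sum, hb1, mul_one]
  have hψ : ∑ t, ∑ u, ψ u * (a t * b u) = ∑ u, ψ u * b u := by
    rw [Finset.sum_comm]
    simp only [mul_left_comm _ (a _), ← Finset.sum_mul, ha1, one_mul]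
  calc ∑ t, φ t * a t + ∑ u, ψ u * b u
      = ∑ t, ∑ u, (φ t + ψ u) * (a t * b u) := by
        simp only [add_mul, Finset.sum_add_distrib, hφ, hψ]
    _ ≤ ∑ t, ∑ u, c t u * (a t * b u) := by
        gcongr with t _ u _
        · exact mul_nonneg (ha t) (hb u)
        · exact hc t u

section YProgram

variable {L : ℕ} {ρ : Fin L → ℝ}

theorem mu1_nonneg (hρ : ∀ p, 0 ≤ ρ p ∧ ρ p ≤ 1) (p : Fin L) (t : Fin 2) : 0 ≤ mu1 ρ p t := by
  unfold mu1
  split_ifs <;> linarith [hρ p]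

theorem sum_mu1 (ρ : Fin L → ℝ) (p : Fin L) : ∑ t, mu1 ρ p t = 1 := by
  simp [mu1, Fin.sum_univ_two]

theorem dualObj_le_of_feasible (hρ : ∀ p, 0 ≤ ρ p ∧ ρ p ≤ 1) {C Y : Matrix (Idx L) (Idx L) ℝ}
    {φ ψ : Fin L → Fin L → Fin 2 → ℝ}
    (hfeas : ∀ p q : Fin L, p < q → ∀ t u : Fin 2,
      φ p q t + ψ p q u ≤ C (p, t) (q, u) - Y (p, t) (q, u)) :
    dualObj ρ Y φ ψ ≤ 2 * ∑ p, ∑ q, (if p < q then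
        ∑ t, ∑ u, (C (p, t) (q, u) - Y (p, t) (q, u)) * (mu1 ρ p t * mu1 ρ q u) else 0)
      - ∑ p, ∑ t, Y (p, t) (p, t) * mu1 ρ p t := by
  unfold dualObj
  gcongr with p _ q _
  split_ifs with hpq
  · exact sum_mul_add_sum_mul_le_of_add_le (mu1_nonneg hρ p) (mu1_nonneg hρ q)
      (sum_mu1 ρ p) (sum_mu1 ρ q) (hfeas p q hpq)
  · rfl

theorem Yvalues_nonempty (ρ : Fin L → ℝ) (C Y : Matrix (Idx L) (Idx L) ℝ) :
    (Yvalues ρ C Y).Nonempty :=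
  ⟨_, fun p q t => min (C (p, t) (q, 0) - Y (p, t) (q, 0)) (C (p, t) (q, 1) - Y (p, t) (q, 1)),
    0, fun p q _ t u => by fin_cases u <;> simp, rfl⟩

theorem Yvalues_bddAbove (hρ : ∀ p, 0 ≤ ρ p ∧ ρ p ≤ 1) (C Y : Matrix (Idx L) (Idx L) ℝ) :
    BddAbove (Yvalues ρ C Y) :=
  ⟨_, fun _ ⟨_, _, hfeas, hx⟩ => hx ▸ dualObj_le_of_feasible hρ hfeas⟩

def blockPairing (ρ : Fin L → ℝ) (w : Idx L → ℝ) (p : Fin L) : ℝ :=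
  ∑ t, w (p, t) * mu1 ρ p t

def colShiftCost (ρ : Fin L → ℝ) (v : Idx L → ℝ) (P : Fin L → ℝ) : ℝ :=
  ∑ p, (2 * ∑ q ∈ Finset.Ioi p, P q + P p) * blockPairing ρ v p

theorem dualObj_add_colShift (ρ : Fin L → ℝ) (Y : Matrix (Idx L) (Idx L) ℝ) (v : Idx L → ℝ)
    (P : Fin L → ℝ) (φ ψ : Fin L → Fin L → Fin 2 → ℝ) :
    dualObj ρ (Y + Matrix.of fun a b => v a * P b.1) φ ψ
      + colShiftCost ρ v P = dualObj ρ Y (fun p q t => φ p q t + v (p, t) * P q) ψ := by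
  have hoff : ∀ p q : Fin L,
      (if p < q then ∑ t, (φ p q t + v (p, t) * P q) * mu1 ρ p t + ∑ u, ψ p q u * mu1 ρ q u
        else 0)
      = (if p < q then ∑ t, φ p q t * mu1 ρ p t + ∑ u, ψ p q u * mu1 ρ q u else 0)
        + (if p < q then P q * blockPairing ρ v p else 0) := by
    intro p q
    split_ifs
    · simp only [blockPairing, add_mul, Finset.sum_add_distrib, Finset.mul_sum, mul_comm _ (P q),
        mul_assoc]
      ring
    · simp
  have hIoi : ∀ p : Fin L, ∑ q, (if p < q then P q * blockPairing ρ v p else 0)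
      = (∑ q ∈ Finset.Ioi p, P q) * blockPairing ρ v p := by
    intro p
    rw [← Finset.sum_filter, Finset.filter_lt_eq_Ioi, Finset.sum_mul]
  have hdiag : ∑ p, ∑ t,
        (Y + Matrix.of fun a b => v a * P b.1 : Matrix (Idx L) (Idx L) ℝ) (p, t) (p, t) * mu1 ρ p t
      = ∑ p, ∑ t, Y (p, t) (p, t) * mu1 ρ p t + ∑ p, P p * blockPairing ρ v p := by
    simp only [Matrix.add_apply, Matrix.of_apply, add_mul, Finset.sum_add_distrib,
      blockPairing, Finset.mul_sum, mul_comm _ (P _), mul_assoc]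
  unfold dualObj colShiftCost
  dsimp only
  simp only [hoff, Finset.sum_add_distrib, hIoi, hdiag]
  simp only [add_mul, Finset.sum_add_distrib, mul_assoc, ← Finset.mul_sum]
  ring

theorem Yvalues_add_colShift (ρ : Fin L → ℝ) (C Y : Matrix (Idx L) (Idx L) ℝ) (v : Idx L → ℝ)
    (P : Fin L → ℝ) :
    Yvalues ρ C (Y + Matrix.of fun a b => v a * P b.1)
      = (· - colShiftCost ρ v P) '' Yvalues ρ C Y := by
  ext x
  constructor
  · rintro ⟨φ, ψ, hfeas, rfl⟩
    refine ⟨_, ⟨fun p q t => φ p q t + v (p, t) * P q, ψ, fun p q hpq t u => ?_, rfl⟩, ?_⟩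
    · have := hfeas p q hpq t u
      simp only [Matrix.add_apply, Matrix.of_apply] at this
      linarith
    · dsimp only
      rw [← dualObj_add_colShift, add_sub_cancel_right]
  · rintro ⟨_, ⟨φ, ψ, hfeas, rfl⟩, rfl⟩
    refine ⟨fun p q t => φ p q t - v (p, t) * P q, ψ, fun p q hpq t u => ?_, ?_⟩
    · have := hfeas p q hpq t u
      simp only [Matrix.add_apply, Matrix.of_apply]
      linarith
    · have := dualObj_add_colShift ρ Y v P (fun p q t => φ p q t - v (p, t) * P q) ψ
      simp only [sub_add_cancel] at this
      dsimp only
      rw [← this, add_sub_cancel_right]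

theorem fval_add_colShift (hρ : ∀ p, 0 ≤ ρ p ∧ ρ p ≤ 1) (C Y : Matrix (Idx L) (Idx L) ℝ)
    (v : Idx L → ℝ) (P : Fin L → ℝ) :
    fval ρ C (Y + Matrix.of fun a b => v a * P b.1) = fval ρ C Y - colShiftCost ρ v P := by
  rw [fval, fval, Yvalues_add_colShift]
  exact ((OrderIso.addRight _).map_csSup' (Yvalues_nonempty ρ C Y) (Yvalues_bddAbove hρ C Y)).symm

theorem colShiftCost_Pvec (ρ : Fin L → ℝ) (v : Idx L → ℝ) (i : Fin L) (h : (i : ℕ) + 1 < L) :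
    colShiftCost ρ v (fun q => Pvec i h (q, 0))
      = -(blockPairing ρ v i + blockPairing ρ v ⟨(i : ℕ) + 1, h⟩) := by
  have hP : ∀ q, Pvec i h (q, 0)
      = (if q = i then 1 else 0) - (if q = ⟨(i : ℕ) + 1, h⟩ then 1 else 0) := by
    intro q
    unfold Pvec
    split_ifs <;> simp_all [Fin.ext_iff]
  have hIoi : ∀ p, ∑ q ∈ Finset.Ioi p, Pvec i h (q, 0) = -(if p = i then 1 else 0) := by
    intro p
    simp only [hP, Finset.sum_sub_distrib, Finset.sum_ite_eq', Finset.mem_Ioi]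
    split_ifs <;> simp only [Fin.lt_def, Fin.ext_iff] at * <;> first | omega | norm_num
  simp only [colShiftCost, hIoi]
  simp only [hP, mul_neg, add_mul, sub_mul, neg_mul, ite_mul, one_mul, zero_mul,
    Finset.sum_add_distrib, Finset.sum_sub_distrib, Finset.sum_neg_distrib, mul_ite, mul_one, mul_zero,
    Finset.sum_ite_eq', Finset.mem_univ, if_true]
  ring

end YProgram

theorem f_column_shift_general (L : ℕ) (ρ : Fin L → ℝ)
    (hρ : ∀ p, 0 ≤ ρ p ∧ ρ p ≤ 1)
    (C : Matrix (Idx L) (Idx L) ℝ)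
    (Y : Matrix (Idx L) (Idx L) ℝ)
    (v : Idx L → ℝ) (i : Fin L) (h : (i : ℕ) + 1 < L) :
    fval ρ C (Y + Matrix.of fun a b => v a * Pvec i h b)
      = fval ρ C Y + (∑ t : Fin 2, v (i, t) * mu1 ρ i t)
        + (∑ t : Fin 2, v (⟨(i : ℕ) + 1, h⟩, t) * mu1 ρ ⟨(i : ℕ) + 1, h⟩ t) := by
  have hshift : fval ρ C (Y + Matrix.of fun a b => v a * Pvec i h b)
      = fval ρ C Y - colShiftCost ρ v (fun q => Pvec i h (q, 0)) :=
    fval_add_colShift hρ C Y v (fun q => Pvec i h (q, 0))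
  rw [hshift, colShiftCost_Pvec, blockPairing, blockPairing]
  ring

/-- Column-shift identity for the `Y`-program value:
`f(Y + v P_iᵀ) = f(Y) + v_i·μ_i^(1) + v_{i+1}·μ_{i+1}^(1)`. -/
theorem f_column_shift (L : ℕ) (hL : 2 ≤ L) (ρ : Fin L → ℝ)
    (hρ : ∀ p, 0 ≤ ρ p ∧ ρ p ≤ 1)
    (C : Matrix (Idx L) (Idx L) ℝ) (hCsymm : C.IsSymm)
    (hCdiag : ∀ p : Fin L, ∀ t u : Fin 2, C (p, t) (p, u) = 0)
    (Y : Matrix (Idx L) (Idx L) ℝ)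
    (v : Idx L → ℝ) (i : Fin L) (h : (i : ℕ) + 1 < L) :
    fval ρ C (Y + Matrix.of fun a b => v a * Pvec i h b)
      = fval ρ C Y + (∑ t : Fin 2, v (i, t) * mu1 ρ i t)
        + (∑ t : Fin 2, v (⟨(i : ℕ) + 1, h⟩, t) * mu1 ρ ⟨(i : ℕ) + 1, h⟩ t) :=
  f_column_shift_general L ρ hρ C Y v i h
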